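/- Let N, N₁, N₂, K be positive integers with N₁ + N₂ = N + 1. Let z₁,…,z_L be pairwise distinct nonzero complex numbers with L ≤ K, such that the set {z₁,…,z_L} is closed under the map z ↦ 1/conj(z) (i.e., for each k, either |z_k| = 1 or 1/conj(z_k) also belongs to the set). Let s₁,…,s_L ∈ ℂ and y ∈ ℂ^N with y_j = Σ_{k=1}^L s_k · z_k^{j−1}. Then the double Hankel matrix D(y) = [H(y) | J_{N₁}·conj(H(y))·J_{N₂}] satisfies rank(D(y)) ≤ K. -/

import Mathlib

/-!
The columns of `H(y)` lie in the span of the power vectors `(z_k ^ j)_j`, since `y` is an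
exponential sum with nodes `z_k`. The second block `J ⬝ conj(H(y)) ⬝ J` is again a Hankel
matrix, of the reversed conjugate signal `conj(y_{N-1-j})`, which is an exponential sum with
nodes `1 / conj(z_k)`. As this set of nodes is contained in `{z_k}`, both blocks factor through
the same `N₁ × L` matrix of powers, so `rank D(y) ≤ L ≤ K`.
-/

open Matrix

/-- The `N₁ × N₂` Hankel matrix of a signal `y ∈ ℂ^N`, where `N₁ + N₂ = N + 1`. -/
noncomputable def hankelM {N : ℕ} (N₁ N₂ : ℕ) (h : N₁ + N₂ = N + 1) (y : Fin N → ℂ) :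
    Matrix (Fin N₁) (Fin N₂) ℂ :=
  fun j l => y ⟨j.1 + l.1, by have := j.2; have := l.2; omega⟩

/-- The `m × m` reversal matrix `J_m`, with ones on the anti-diagonal. -/
noncomputable def revM (m : ℕ) : Matrix (Fin m) (Fin m) ℂ :=
  fun i j => if i.1 + j.1 + 1 = m then 1 else 0

/-- The double Hankel matrix `D(y) = [H(y) | J_{N₁} ⬝ conj(H(y)) ⬝ J_{N₂}]`. -/
noncomputable def dHankel {N : ℕ} (N₁ N₂ : ℕ) (h : N₁ + N₂ = N + 1) (y : Fin N → ℂ) :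
    Matrix (Fin N₁) (Fin N₂ ⊕ Fin N₂) ℂ :=
  Matrix.fromCols (hankelM N₁ N₂ h y)
    (revM N₁ * (hankelM N₁ N₂ h y).map (starRingEnd ℂ) * revM N₂)

open Finset

section Reversal

variable {m n : ℕ}

lemma revM_apply (i j : Fin m) : revM m i j = if j = i.rev then 1 else 0 := by
  simp only [revM, Fin.ext_iff, Fin.val_rev]
  congr 1
  apply propext
  omega

lemma revM_mul_apply (M : Matrix (Fin m) (Fin n) ℂ) (i : Fin m) (j : Fin n) :
    (revM m * M) i j = M i.rev j := by
  simp [mul_apply, revM_apply]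

lemma mul_revM_apply (M : Matrix (Fin m) (Fin n) ℂ) (i : Fin m) (j : Fin n) :
    (M * revM n) i j = M i j.rev := by
  simp [mul_apply, revM_apply, ← Fin.rev_eq_iff]

lemma revM_mul_mul_revM_apply (M : Matrix (Fin m) (Fin n) ℂ) (i : Fin m) (j : Fin n) :
    (revM m * M * revM n) i j = M i.rev j.rev := by
  rw [mul_revM_apply, revM_mul_apply]

end Reversal

section Hankel

variable {N N₁ N₂ : ℕ}

lemma hankelM_map (h : N₁ + N₂ = N + 1) (y : Fin N → ℂ) (f : ℂ → ℂ) :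
    (hankelM N₁ N₂ h y).map f = hankelM N₁ N₂ h (f ∘ y) :=
  rfl

lemma revM_mul_hankelM_mul_revM (h : N₁ + N₂ = N + 1) (y : Fin N → ℂ) :
    revM N₁ * hankelM N₁ N₂ h y * revM N₂ = hankelM N₁ N₂ h (fun i => y i.rev) := by
  ext j l
  rw [revM_mul_mul_revM_apply]
  simp only [hankelM]
  congr 1
  ext
  simp only [Fin.val_rev]
  omega

lemma revM_mul_map_conj_hankelM_mul_revM (h : N₁ + N₂ = N + 1) (y : Fin N → ℂ) :
    revM N₁ * (hankelM N₁ N₂ h y).map (starRingEnd ℂ) * revM N₂ =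
      hankelM N₁ N₂ h (fun i => starRingEnd ℂ (y i.rev)) := by
  rw [hankelM_map, revM_mul_hankelM_mul_revM]
  rfl

end Hankel

section ExpSum

variable {N L : ℕ}

def IsExpSum (z : Fin L → ℂ) (y : Fin N → ℂ) : Prop :=
  ∃ c : Fin L → ℂ, ∀ j : Fin N, y j = ∑ k, c k * z k ^ (j : ℕ)

def powMatrix {R : Type*} [Monoid R] (n : ℕ) (z : Fin L → R) : Matrix (Fin n) (Fin L) R :=
  of fun j k => z k ^ (j : ℕ)

lemma IsExpSum.hankelM_eq_powMatrix_mul {z : Fin L → ℂ} {y : Fin N → ℂ} (hy : IsExpSum z y)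
    {N₁ N₂ : ℕ} (h : N₁ + N₂ = N + 1) :
    ∃ B : Matrix (Fin L) (Fin N₂) ℂ, hankelM N₁ N₂ h y = powMatrix N₁ z * B := by
  obtain ⟨c, hc⟩ := hy
  refine ⟨of fun k l => c k * z k ^ (l : ℕ), ?_⟩
  ext j l
  simp only [hankelM, hc, mul_apply, powMatrix, of_apply]
  exact sum_congr rfl fun k _ => by ring

lemma sum_mul_pow_comp_eq {R ι : Type*} [CommSemiring R] [Fintype ι] (σ : ι → Fin L)
    (t : ι → R) (z : Fin L → R) (j : ℕ) :
    ∑ k, t k * z (σ k) ^ j = ∑ m, (∑ k with σ k = m, t k) * z m ^ j := by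
  rw [← sum_fiberwise univ σ]
  refine sum_congr rfl fun m _ => ?_
  rw [sum_mul]
  exact sum_congr rfl fun k hk => by rw [(mem_filter.1 hk).2]

/-- Conjugating and reversing an exponential sum replaces each node `z` by `1 / conj z`. -/
lemma IsExpSum.conj_rev {z : Fin L → ℂ} {y : Fin N → ℂ} (hy : IsExpSum z y)
    (hz0 : ∀ k, z k ≠ 0) (hclosed : ∀ k, ∃ k', z k' = (starRingEnd ℂ (z k))⁻¹) :
    IsExpSum z (fun i => starRingEnd ℂ (y i.rev)) := by
  choose σ hσ using hclosed
  obtain ⟨c, hc⟩ := hy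
  set t : Fin L → ℂ := fun k => starRingEnd ℂ (c k) * starRingEnd ℂ (z k) ^ (N - 1)
  refine ⟨fun m => ∑ k with σ k = m, t k, fun j => ?_⟩
  have hj : (j : ℕ) ≤ N - 1 := Nat.le_sub_one_of_lt j.2
  calc starRingEnd ℂ (y j.rev)
      = ∑ k, starRingEnd ℂ (c k) * starRingEnd ℂ (z k) ^ (N - 1 - j) := by
        simp only [hc, map_sum, map_mul, map_pow, Fin.val_rev]
        congr! 3
        omega
    _ = ∑ k, t k * z (σ k) ^ (j : ℕ) := by
        refine sum_congr rfl fun k _ => ?_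
        rw [hσ, inv_pow, pow_sub₀ _ ((map_ne_zero _).2 (hz0 k)) hj, mul_assoc]
    _ = _ := sum_mul_pow_comp_eq σ t z j

end ExpSum

lemma rank_fromCols_mul_le {R : Type*} [CommRing R] [StrongRankCondition R] {m n₁ n₂ ι : Type*}
    [Fintype n₁] [Fintype n₂] [Fintype ι] (V : Matrix m ι R) (A : Matrix ι n₁ R)
    (B : Matrix ι n₂ R) :
    (fromCols (V * A) (V * B)).rank ≤ Fintype.card ι := by
  rw [← mul_fromCols]
  exact (rank_mul_le_left _ _).trans V.rank_le_card_width

theorem statement7_general (N N₁ N₂ K L : ℕ) (hLK : L ≤ K) (h : N₁ + N₂ = N + 1)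
    (z : Fin L → ℂ) (hz0 : ∀ k, z k ≠ 0)
    (hclosed : ∀ k, ∃ k', z k' = (starRingEnd ℂ (z k))⁻¹)
    (s : Fin L → ℂ) (y : Fin N → ℂ)
    (hy : ∀ j : Fin N, y j = ∑ k, s k * z k ^ (j : ℕ)) :
    (dHankel N₁ N₂ h y).rank ≤ K := by
  have hexp : IsExpSum z y := ⟨s, hy⟩
  obtain ⟨A, hA⟩ := hexp.hankelM_eq_powMatrix_mul h
  obtain ⟨B, hB⟩ := (hexp.conj_rev hz0 hclosed).hankelM_eq_powMatrix_mul h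
  rw [dHankel, revM_mul_map_conj_hankelM_mul_revM, hA, hB]
  exact (rank_fromCols_mul_le _ A B).trans ((Fintype.card_fin L).trans_le hLK)

theorem statement7 (N N₁ N₂ K L : ℕ) (hN : 0 < N) (hN₁ : 0 < N₁) (hN₂ : 0 < N₂)
    (hK : 0 < K) (hL : 0 < L) (hLK : L ≤ K) (h : N₁ + N₂ = N + 1)
    (z : Fin L → ℂ) (hz : Function.Injective z) (hz0 : ∀ k, z k ≠ 0)
    (hclosed : ∀ k, ∃ k', z k' = (starRingEnd ℂ (z k))⁻¹)
    (s : Fin L → ℂ) (y : Fin N → ℂ)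
    (hy : ∀ j : Fin N, y j = ∑ k, s k * z k ^ (j : ℕ)) :
    (dHankel N₁ N₂ h y).rank ≤ K :=
  statement7_general N N₁ N₂ K L hLK h z hz0 hclosed s y hy
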